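/- For integers m, n ≥ 0 and all x, y ∈ [0,1], the kernel of the composition M_m ∘ M_n of classical (univariate) Bernstein–Durrmeyer operators satisfies the Legendre-type representation K_{m,n}(x,y) = Σ_{k=0}^{min{m,n}} (m^{k↓}/(m+k+1)^{k↓}) · (n^{k↓}/(n+k+1)^{k↓}) · (2k+1) · (Σ_{i=0}^{k} (−1)^i C(k,i) p_{k,i}(x)) · (Σ_{j=0}^{k} (−1)^j C(k,j) p_{k,j}(y)), where a^{k↓} := a(a−1)⋯(a−k+1) denotes the falling factorial. -/

import Mathlib

open MeasureTheory

/-- Bernstein basis polynomial `p_{n,k}(x) = C(n,k) x^k (1-x)^(n-k)` on `[0,1]`. -/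
noncomputable def bernsteinBasis (n k : ℕ) (x : ℝ) : ℝ :=
  (n.choose k : ℝ) * x ^ k * (1 - x) ^ (n - k)

/-- Kernel of the classical Bernstein–Durrmeyer operator `M_n`. -/
noncomputable def durrmeyerKernel (n : ℕ) (x y : ℝ) : ℝ :=
  (n + 1 : ℝ) * ∑ k ∈ Finset.range (n + 1), bernsteinBasis n k x * bernsteinBasis n k y

/-- Kernel of the composition `M_m ∘ M_n`. -/
noncomputable def durrmeyerKernelComp (m n : ℕ) (x y : ℝ) : ℝ :=
  ∫ t in (0:ℝ)..1, durrmeyerKernel m x t * durrmeyerKernel n t y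

open Finset intervalIntegral

noncomputable def Lg (k : ℕ) (x : ℝ) : ℝ :=
  ∑ i ∈ range (k + 1), (-1 : ℝ) ^ i * (k.choose i : ℝ) * bernsteinBasis k i x

noncomputable def nuVal (r k : ℕ) : ℝ :=
  if k ≤ r then (-1:ℝ)^k * (r.factorial * r.factorial) / ((r-k).factorial * (r+k+1).factorial)
  else 0

noncomputable def Dc (n r s : ℕ) : ℝ :=
  ((n+1).factorial * r.factorial : ℝ) / ((n+r+1).factorial) * (r.choose s) * (n.choose s)

noncomputable def lam (n k : ℕ) : ℝ :=
  (n.descFactorial k : ℝ) / ((n+k+1).descFactorial k : ℝ)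

lemma contPoly (a b : ℕ) : Continuous fun t : ℝ => t ^ a * (1 - t) ^ b := by
  continuity

lemma intPoly (a b : ℕ) : IntervalIntegrable (fun t : ℝ => t ^ a * (1 - t) ^ b) volume 0 1 :=
  (contPoly a b).intervalIntegrable _ _

lemma beta_nat (a b : ℕ) :
    ∫ t in (0:ℝ)..1, t ^ a * (1 - t) ^ b = (a.factorial * b.factorial : ℝ) / (a + b + 1).factorial := by
  induction a generalizing b with
  | zero =>
    simp only [pow_zero, one_mul]
    rw [intervalIntegral.integral_comp_sub_left (fun t : ℝ => t ^ b) 1]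
    norm_num [integral_pow, Nat.factorial_succ]
    rw [eq_div_iff (by positivity)]
    field_simp
  | succ a ih =>
    have key : ∫ t in (0:ℝ)..1, ((a+1:ℝ) * (t ^ a * (1 - t) ^ (b+1)) - (b+1:ℝ) * (t ^ (a+1) * (1 - t) ^ b)) = 0 := by
      have h : ∀ t : ℝ, HasDerivAt (fun t : ℝ => t ^ (a+1) * (1 - t) ^ (b+1))
          ((a+1:ℝ) * (t ^ a * (1 - t) ^ (b+1)) - (b+1:ℝ) * (t ^ (a+1) * (1 - t) ^ b)) t := by
        intro t
        have h1 : HasDerivAt (fun t : ℝ => t ^ (a+1)) ((a+1:ℝ) * t ^ a) t := by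
          simpa using (hasDerivAt_pow (a+1) t)
        have h2 : HasDerivAt (fun t : ℝ => (1 - t) ^ (b+1)) (-((b+1:ℝ) * (1 - t) ^ b)) t := by
          have := ((hasDerivAt_pow (b+1) (1 - t)).comp t ((hasDerivAt_id t).const_sub 1))
          simpa [Function.comp_def] using this
        have := h1.fun_mul h2
        exact this.congr_deriv (by push_cast; ring)
      have := intervalIntegral.integral_eq_sub_of_hasDerivAt (fun t _ => h t)
        (((continuous_const.mul ((continuous_pow a).mul ((continuous_const.sub continuous_id).pow (b+1)))).sub
          (continuous_const.mul ((continuous_pow (a+1)).mul ((continuous_const.sub continuous_id).pow b)))).intervalIntegrable 0 1)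
      simpa using this
    rw [intervalIntegral.integral_sub ((intPoly a (b+1)).const_mul _) ((intPoly (a+1) b).const_mul _),
      intervalIntegral.integral_const_mul, intervalIntegral.integral_const_mul, ih (b+1)] at key
    have hb1 : ((b:ℝ)+1) ≠ 0 := by positivity
    have : ∫ t in (0:ℝ)..1, t ^ (a+1) * (1 - t) ^ b
        = ((a:ℝ)+1) / ((b:ℝ)+1) * ((a.factorial * (b+1).factorial : ℝ) / (a + (b+1) + 1).factorial) := by
      field_simp at key ⊢
      linarith
    rw [this]
    rw [Nat.factorial_succ a, Nat.factorial_succ b]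
    have : (a+1) + b + 1 = a + (b+1) + 1 := by ring
    rw [this]
    have hf : ((a + (b+1) + 1).factorial : ℝ) ≠ 0 := by positivity
    field_simp
    push_cast
    ring

lemma altsum (k : ℕ) : ∀ r m : ℕ,
    ∑ i ∈ range (k+1), (-1:ℝ)^i * (k.choose i) * ((m+i).choose r) =
      if k ≤ r then (-1:ℝ)^k * ((m).choose (r-k)) else 0 := by
  induction k with
  | zero => intro r m; simp
  | succ k ih =>
    intro r m
    have expand : ∑ i ∈ range (k+2), (-1:ℝ)^i * ((k+1).choose i) * ((m+i).choose r)
        = (∑ i ∈ range (k+1), (-1:ℝ)^i * (k.choose i) * ((m+i).choose r))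
          - ∑ i ∈ range (k+1), (-1:ℝ)^i * (k.choose i) * ((m+1+i).choose r) := by
      rw [Finset.sum_range_succ' _ (k+1)]
      have peel : ∑ i ∈ range (k+1), (-1:ℝ)^i * (k.choose i) * ((m+i).choose r)
          = (∑ i ∈ range k, (-1:ℝ)^(i+1) * (k.choose (i+1)) * ((m+(i+1)).choose r))
            + ((m).choose r : ℝ) := by
        rw [Finset.sum_range_succ' _ k]; simp
      rw [peel]
      have hsplit : ∀ i ∈ range (k+1), (-1:ℝ)^(i+1) * (((k+1)).choose (i+1)) * ((m+(i+1)).choose r)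
          = (-1:ℝ)^(i+1) * (k.choose i) * ((m+1+i).choose r)
            + (-1:ℝ)^(i+1) * (k.choose (i+1)) * ((m+(i+1)).choose r) := by
        intro i _
        rw [Nat.choose_succ_succ k i]
        push_cast
        have : m + (i+1) = m + 1 + i := by ring
        rw [this]
        ring
      rw [Finset.sum_congr rfl hsplit, Finset.sum_add_distrib]
      have last0 : ∑ i ∈ range (k+1), (-1:ℝ)^(i+1) * (k.choose (i+1)) * ((m+(i+1)).choose r)
          = ∑ i ∈ range k, (-1:ℝ)^(i+1) * (k.choose (i+1)) * ((m+(i+1)).choose r) := by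
        rw [Finset.sum_range_succ]; simp [Nat.choose_succ_self]
      rw [last0]
      have neg : ∑ i ∈ range (k+1), (-1:ℝ)^(i+1) * (k.choose i) * ((m+1+i).choose r)
          = - ∑ i ∈ range (k+1), (-1:ℝ)^i * (k.choose i) * ((m+1+i).choose r) := by
        rw [← Finset.sum_neg_distrib]
        apply Finset.sum_congr rfl; intro i _; ring
      rw [neg]
      simp only [Nat.add_comm 1 k, Nat.choose_zero_right, Nat.add_zero, Nat.cast_one]
      ring
    rw [expand]
    cases r with
    | zero =>
      simp
    | succ rr =>
      have pascal : ∑ i ∈ range (k+1), (-1:ℝ)^i * (k.choose i) * ((m+1+i).choose (rr+1))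
          = (∑ i ∈ range (k+1), (-1:ℝ)^i * (k.choose i) * ((m+i).choose (rr+1)))
            + ∑ i ∈ range (k+1), (-1:ℝ)^i * (k.choose i) * ((m+i).choose rr) := by
        rw [← Finset.sum_add_distrib]
        apply Finset.sum_congr rfl
        intro i _
        have : m + 1 + i = (m + i) + 1 := by ring
        rw [this, Nat.choose_succ_succ (m+i) rr]
        push_cast; ring
      rw [pascal, ih rr m]
      by_cases hk : k ≤ rr
      · rw [if_pos hk, if_pos (by omega : k + 1 ≤ rr + 1)]
        have : rr + 1 - (k+1) = rr - k := by omega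
        rw [this]; ring
      · rw [if_neg hk, if_neg (by omega : ¬ (k + 1 ≤ rr + 1))]
        ring

lemma continuous_bern (n k : ℕ) : Continuous (bernsteinBasis n k) := by
  unfold bernsteinBasis; continuity

lemma continuous_Lg (k : ℕ) : Continuous (Lg k) := by
  unfold Lg; exact continuous_finset_sum _ (fun i _ => (continuous_const.mul (continuous_bern k i)))

lemma bern_moment (n j r : ℕ) (h : j ≤ n) :
    ∫ t in (0:ℝ)..1, t ^ r * bernsteinBasis n j t
      = (n.choose j : ℝ) * ((r+j).factorial * (n-j).factorial) / (r+n+1).factorial := by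
  have e : (fun t : ℝ => t ^ r * bernsteinBasis n j t)
      = fun t : ℝ => (n.choose j : ℝ) * (t ^ (r+j) * (1-t) ^ (n-j)) := by
    funext t; unfold bernsteinBasis; ring
  rw [e, intervalIntegral.integral_const_mul, beta_nat]
  have e2 : r + j + (n - j) + 1 = r + n + 1 := by omega
  rw [e2]; ring

lemma nu_if (r k : ℕ) :
    ∫ t in (0:ℝ)..1, t ^ r * Lg k t
      = if k ≤ r then (-1:ℝ)^k * (r.factorial * r.factorial) / ((r-k).factorial * (r+k+1).factorial)
        else 0 := by
  have expand : (fun t : ℝ => t ^ r * Lg k t)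
      = fun t : ℝ => ∑ i ∈ range (k+1),
          ((-1:ℝ)^i * (k.choose i : ℝ)) * (t ^ r * bernsteinBasis k i t) := by
    funext t; unfold Lg; rw [Finset.mul_sum]; apply Finset.sum_congr rfl; intro i _; ring
  rw [expand, intervalIntegral.integral_finset_sum (fun i _ =>
    ((continuous_const.fun_mul ((continuous_pow r).fun_mul (continuous_bern k i))).intervalIntegrable 0 1))]
  have step : ∀ i ∈ range (k+1),
      (∫ t in (0:ℝ)..1, ((-1:ℝ)^i * (k.choose i : ℝ)) * (t ^ r * bernsteinBasis k i t))
      = ((k.factorial * r.factorial : ℝ) / (r+k+1).factorial)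
          * ((-1:ℝ)^i * (k.choose i : ℝ) * ((r+i).choose r : ℝ)) := by
    intro i hi
    rw [Finset.mem_range] at hi
    have hik : i ≤ k := by omega
    rw [intervalIntegral.integral_const_mul, bern_moment k i r hik]
    have h1 := Nat.choose_mul_factorial_mul_factorial hik
    have h2 := Nat.add_choose_mul_factorial_mul_factorial r i
    have h2' : (r+i).choose r = (r+i).choose i := by
      have := Nat.choose_symm (Nat.le_add_left i r)
      rwa [Nat.add_sub_cancel] at this
    rw [← h2'] at h2
    have key : k.choose i * k.choose i * ((r+i).factorial * (k-i).factorial) * i.factorial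
        = k.factorial * r.factorial * (k.choose i * (r+i).choose r) * i.factorial := by
      calc k.choose i * k.choose i * ((r+i).factorial * (k-i).factorial) * i.factorial
          = (k.choose i * i.factorial * (k-i).factorial) * (k.choose i * (r+i).factorial) := by ring
        _ = k.factorial * (k.choose i * ((r+i).choose r * r.factorial * i.factorial)) := by
            rw [h1, h2]
        _ = _ := by ring
    have key2n := Nat.eq_of_mul_eq_mul_right (Nat.factorial_pos i) key
    have key2 : (k.choose i : ℝ) * (k.choose i) * ((r+i).factorial * (k-i).factorial)
        = (k.factorial : ℝ) * r.factorial * ((k.choose i) * ((r+i).choose r)) := by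
      exact_mod_cast congrArg (Nat.cast (R := ℝ)) key2n
    linear_combination ((-1:ℝ)^i / ((r+k+1).factorial : ℝ)) * key2
  rw [Finset.sum_congr rfl step, ← Finset.mul_sum, altsum k r r]
  by_cases hkr : k ≤ r
  · rw [if_pos hkr, if_pos hkr, Nat.choose_symm hkr]
    have h3 := Nat.choose_mul_factorial_mul_factorial hkr
    have h3R : (r.choose k : ℝ) * k.factorial * (r-k).factorial = r.factorial := by
      exact_mod_cast congrArg (Nat.cast (R := ℝ)) h3
    have hne : ((r+k+1).factorial : ℝ) ≠ 0 := by positivity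
    have hne2 : ((r-k).factorial : ℝ) ≠ 0 := by positivity
    field_simp
    linear_combination h3R
  · rw [if_neg hkr, if_neg hkr, mul_zero]

lemma nu (r k : ℕ) : ∫ t in (0:ℝ)..1, t ^ r * Lg k t = nuVal r k := nu_if r k

/-- `f` is a polynomial function with coefficients supported on degrees `< d`. -/
def PD (d : ℕ) (f : ℝ → ℝ) : Prop := ∃ w : ℕ → ℝ, ∀ t, f t = ∑ s ∈ range d, w s * t ^ s

lemma PD.monomial {d a : ℕ} (c : ℝ) (h : a < d) : PD d (fun t => c * t ^ a) := by
  refine ⟨fun s => if s = a then c else 0, fun t => ?_⟩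
  simp only [ite_mul, zero_mul]
  rw [Finset.sum_ite_eq' (range d) a (fun s => c * t ^ s), if_pos (Finset.mem_range.mpr h)]

lemma PD.finsum {d : ℕ} {ι : Type*} (s : Finset ι) (f : ι → ℝ → ℝ)
    (h : ∀ i ∈ s, PD d (f i)) : PD d (fun t => ∑ i ∈ s, f i t) := by
  classical
  induction s using Finset.cons_induction with
  | empty => exact ⟨0, by simp⟩
  | cons i s his ih =>
    obtain ⟨w1, hw1⟩ := h i (Finset.mem_cons_self i s)
    obtain ⟨w2, hw2⟩ := ih (fun j hj => h j (Finset.mem_cons_of_mem hj))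
    refine ⟨fun s => w1 s + w2 s, fun t => ?_⟩
    simp only [Finset.sum_cons, hw1, hw2, add_mul, Finset.sum_add_distrib]

lemma PD.const_mul {d : ℕ} {f : ℝ → ℝ} (c : ℝ) (h : PD d f) : PD d (fun t => c * f t) := by
  obtain ⟨w, hw⟩ := h
  refine ⟨fun s => c * w s, fun t => ?_⟩
  show c * f t = _
  rw [hw t, Finset.mul_sum]
  exact Finset.sum_congr rfl (fun s _ => by ring)

lemma PD.mono {d e : ℕ} {f : ℝ → ℝ} (hde : d ≤ e) (h : PD d f) : PD e f := by
  obtain ⟨w, hw⟩ := h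
  refine ⟨fun s => if s ∈ range d then w s else 0, fun t => ?_⟩
  show f t = ∑ s ∈ range e, (if s ∈ range d then w s else 0) * t ^ s
  have h1 : ∑ s ∈ range d, w s * t ^ s
      = ∑ s ∈ range d, (if s ∈ range d then w s else 0) * t ^ s :=
    Finset.sum_congr rfl (fun s hs => by rw [if_pos hs])
  rw [hw t, h1]
  exact Finset.sum_subset (Finset.range_subset_range.mpr hde)
    (fun s _ hs => by rw [if_neg hs, zero_mul])

lemma one_sub_pow_expand (b : ℕ) (t : ℝ) :
    (1 - t) ^ b = ∑ c ∈ range (b + 1), (-1:ℝ)^c * (b.choose c : ℝ) * t ^ c := by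
  rw [show (1:ℝ) - t = -t + 1 by ring, add_pow]
  exact Finset.sum_congr rfl (fun c _ => by rw [one_pow, neg_pow]; ring)

lemma pd_bern (n j : ℕ) : PD (n + 1) (bernsteinBasis n j) := by
  have e : bernsteinBasis n j = fun t =>
      ∑ c ∈ range (n - j + 1), ((n.choose j : ℝ) * ((-1:ℝ)^c * ((n-j).choose c : ℝ))) * t ^ (j + c) := by
    funext t
    unfold bernsteinBasis
    rw [one_sub_pow_expand (n - j) t, Finset.mul_sum]
    exact Finset.sum_congr rfl (fun c _ => by rw [pow_add]; ring)
  rw [e]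
  apply PD.finsum
  intro c hc
  rw [Finset.mem_range] at hc
  by_cases hjn : j ≤ n
  · exact PD.monomial _ (by omega)
  · have : n.choose j = 0 := Nat.choose_eq_zero_of_lt (by omega)
    rw [this]
    exact ⟨0, by simp⟩
lemma pd_Lg (k : ℕ) : PD (k + 1) (Lg k) := by
  unfold Lg
  exact PD.finsum _ _ (fun i _ => PD.const_mul _ (pd_bern k i))

lemma sum_choose_sq (k : ℕ) : ∑ i ∈ range (k + 1), k.choose i * k.choose i = (2 * k).choose k := by
  have h := Nat.add_choose_eq k k k
  rw [show k + k = 2 * k by ring] at h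
  rw [h, Finset.Nat.sum_antidiagonal_eq_sum_range_succ_mk]
  exact Finset.sum_congr rfl (fun i hi => by
    rw [Nat.choose_symm (by rw [Finset.mem_range] at hi; omega : i ≤ k)])

lemma Lg_lead (k : ℕ) : ∃ w : ℕ → ℝ, ∀ t : ℝ,
    Lg k t = (-1:ℝ)^k * (((2*k).choose k : ℕ) : ℝ) * t ^ k + ∑ s ∈ range k, w s * t ^ s := by
  have hterm : ∀ t : ℝ, ∀ i ∈ range (k+1),
      (-1:ℝ)^i * (k.choose i : ℝ) * bernsteinBasis k i t
        = ((-1:ℝ)^i * (k.choose i : ℝ) * (k.choose i : ℝ)) *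
            (∑ c ∈ range (k - i), (-1:ℝ)^c * (((k-i).choose c : ℝ)) * t ^ (i + c))
          + ((-1:ℝ)^k * ((k.choose i : ℝ) * (k.choose i : ℝ))) * t ^ k := by
    intro t i hi
    rw [Finset.mem_range] at hi
    have hik : i ≤ k := by omega
    unfold bernsteinBasis
    rw [one_sub_pow_expand (k - i) t, Finset.sum_range_succ, Nat.choose_self]
    have hp : t ^ k = t ^ i * t ^ (k-i) := by rw [← pow_add]; congr 1; omega
    have hs : (-1:ℝ) ^ k = (-1:ℝ)^i * (-1:ℝ)^(k-i) := by rw [← pow_add]; congr 1; omega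
    have hsum : ∑ c ∈ range (k-i), (-1:ℝ)^c * ((k-i).choose c : ℝ) * t ^ (i+c)
        = t ^ i * ∑ c ∈ range (k-i), (-1:ℝ)^c * ((k-i).choose c : ℝ) * t ^ c := by
      rw [Finset.mul_sum]
      exact Finset.sum_congr rfl (fun c _ => by rw [pow_add]; ring)
    rw [hp, hs, hsum]
    push_cast
    ring
  have main : ∀ t : ℝ, Lg k t
      = (∑ i ∈ range (k+1), ((-1:ℝ)^i * (k.choose i : ℝ) * (k.choose i : ℝ)) *
          (∑ c ∈ range (k - i), (-1:ℝ)^c * (((k-i).choose c : ℝ)) * t ^ (i + c)))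
        + (-1:ℝ)^k * (((2*k).choose k : ℕ) : ℝ) * t ^ k := by
    intro t
    unfold Lg
    rw [Finset.sum_congr rfl (hterm t), Finset.sum_add_distrib]
    congr 1
    rw [← Finset.sum_mul, ← Finset.mul_sum]
    have : ∑ i ∈ range (k+1), (k.choose i : ℝ) * (k.choose i : ℝ) = (((2*k).choose k : ℕ) : ℝ) := by
      rw [← sum_choose_sq k]
      push_cast
      rfl
    rw [this]
  have pd : PD k (fun t => ∑ i ∈ range (k+1), ((-1:ℝ)^i * (k.choose i : ℝ) * (k.choose i : ℝ)) *
      (∑ c ∈ range (k - i), (-1:ℝ)^c * (((k-i).choose c : ℝ)) * t ^ (i + c))) := by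
    apply PD.finsum
    intro i hi
    rw [Finset.mem_range] at hi
    apply PD.const_mul
    apply PD.finsum
    intro c hc
    rw [Finset.mem_range] at hc
    exact PD.monomial _ (by omega)
  obtain ⟨w, hw⟩ := pd
  refine ⟨w, fun t => ?_⟩
  rw [main t, ← hw t]
  ring

lemma span_mono (d : ℕ) : ∀ r, r ≤ d → ∃ c : ℕ → ℝ, ∀ x : ℝ,
    x ^ r = ∑ k ∈ range (d+1), c k * Lg k x := by
  intro r
  induction r using Nat.strong_induction_on with
  | _ r ih =>
    intro hrd
    obtain ⟨w, hw⟩ := Lg_lead r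
    have hCpos : 0 < (2*r).choose r := Nat.choose_pos (by omega)
    have hC : (((2*r).choose r : ℕ) : ℝ) ≠ 0 := by positivity
    set a : ℝ := (-1:ℝ)^r / (((2*r).choose r : ℕ) : ℝ) with ha
    have hcs : ∀ s, s < r → ∃ c : ℕ → ℝ, ∀ x : ℝ,
        x ^ s = ∑ k ∈ range (d+1), c k * Lg k x := fun s hs => ih s hs (by omega)
    choose cc hcc using hcs
    classical
    set cpad : ℕ → ℕ → ℝ := fun s k => if h : s < r then cc s h k else 0 with hcp
    refine ⟨fun k => (if k = r then a else 0) - a * ∑ s ∈ range r, w s * cpad s k, fun x => ?_⟩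
    have split : ∑ k ∈ range (d+1),
        ((if k = r then a else 0) - a * ∑ s ∈ range r, w s * cpad s k) * Lg k x
        = (∑ k ∈ range (d+1), (if k = r then a else 0) * Lg k x)
          - ∑ k ∈ range (d+1), (a * ∑ s ∈ range r, w s * cpad s k) * Lg k x := by
      rw [← Finset.sum_sub_distrib]
      exact Finset.sum_congr rfl (fun k _ => by ring)
    rw [split]
    have first : ∑ k ∈ range (d+1), (if k = r then a else 0) * Lg k x = a * Lg r x := by
      simp only [ite_mul, zero_mul]
      rw [Finset.sum_ite_eq' (range (d+1)) r (fun k => a * Lg k x),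
        if_pos (Finset.mem_range.mpr (by omega))]
    have second : ∑ k ∈ range (d+1), (a * ∑ s ∈ range r, w s * cpad s k) * Lg k x
        = a * ∑ s ∈ range r, w s * x ^ s := by
      have e1 : ∀ k ∈ range (d+1), (a * ∑ s ∈ range r, w s * cpad s k) * Lg k x
          = a * ∑ s ∈ range r, w s * cpad s k * Lg k x := by
        intro k _
        rw [mul_assoc, Finset.sum_mul]
      rw [Finset.sum_congr rfl e1, ← Finset.mul_sum, Finset.sum_comm]
      congr 1
      apply Finset.sum_congr rfl
      intro s hs
      rw [Finset.mem_range] at hs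
      have : ∑ k ∈ range (d+1), w s * cpad s k * Lg k x
          = w s * ∑ k ∈ range (d+1), cpad s k * Lg k x := by
        rw [Finset.mul_sum]
        exact Finset.sum_congr rfl (fun k _ => by ring)
      rw [this]
      congr 1
      have : ∀ k, cpad s k = cc s hs k := fun k => by rw [hcp]; simp [hs]
      rw [Finset.sum_congr rfl (fun k _ => by rw [this k])]
      exact (hcc s hs x).symm
    rw [first, second, hw x, ha]
    have h2 : (-1:ℝ)^(r*2) = 1 := by
      rw [mul_comm, pow_mul]; norm_num
    field_simp
    linear_combination (-(x ^ r * (((2*r).choose r : ℕ) : ℝ))) * h2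

lemma mono_Lg (a b k : ℕ) :
    ∫ t in (0:ℝ)..1, t ^ a * (1-t) ^ b * Lg k t
      = ∑ c ∈ range (b+1), (-1:ℝ)^c * (b.choose c : ℝ) * nuVal (a+c) k := by
  have e : (fun t : ℝ => t ^ a * (1-t) ^ b * Lg k t)
      = fun t : ℝ => ∑ c ∈ range (b+1),
          ((-1:ℝ)^c * (b.choose c : ℝ)) * (t ^ (a+c) * Lg k t) := by
    funext t
    rw [one_sub_pow_expand b t, Finset.mul_sum, Finset.sum_mul]
    exact Finset.sum_congr rfl (fun c _ => by rw [pow_add]; ring)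
  rw [e, intervalIntegral.integral_finset_sum (fun c _ =>
    ((continuous_const.fun_mul ((continuous_pow (a+c)).fun_mul (continuous_Lg k))).intervalIntegrable 0 1))]
  exact Finset.sum_congr rfl (fun c _ => by
    rw [intervalIntegral.integral_const_mul, nu])

lemma LgLg_le {j k : ℕ} (hjk : j ≤ k) :
    ∫ t in (0:ℝ)..1, Lg j t * Lg k t = if j = k then 1 / (2*(k:ℝ)+1) else 0 := by
  have e : (fun t : ℝ => Lg j t * Lg k t)
      = fun t : ℝ => ∑ i ∈ range (j+1),
          ((-1:ℝ)^i * (j.choose i : ℝ) * (j.choose i : ℝ)) * (t ^ i * (1-t) ^ (j-i) * Lg k t) := by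
    funext t
    show Lg j t * Lg k t = _
    unfold Lg bernsteinBasis
    rw [Finset.sum_mul]
    exact Finset.sum_congr rfl (fun i _ => by ring)
  rw [e, intervalIntegral.integral_finset_sum (fun i _ =>
    ((continuous_const.fun_mul ((by continuity : Continuous fun t : ℝ => t ^ i * (1-t) ^ (j-i)).fun_mul
      (continuous_Lg k))).intervalIntegrable 0 1))]
  have step : ∀ i ∈ range (j+1),
      (∫ t in (0:ℝ)..1, ((-1:ℝ)^i * (j.choose i : ℝ) * (j.choose i : ℝ)) * (t ^ i * (1-t) ^ (j-i) * Lg k t))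
      = ((-1:ℝ)^i * (j.choose i : ℝ) * (j.choose i : ℝ)) *
          ∑ c ∈ range (j-i+1), (-1:ℝ)^c * ((j-i).choose c : ℝ) * nuVal (i+c) k := by
    intro i _
    rw [intervalIntegral.integral_const_mul, mono_Lg]
  rw [Finset.sum_congr rfl step]
  by_cases hjk' : j = k
  · subst hjk'
    rw [if_pos rfl]
    have inner : ∀ i ∈ range (j+1),
        ((-1:ℝ)^i * (j.choose i : ℝ) * (j.choose i : ℝ)) *
          ∑ c ∈ range (j-i+1), (-1:ℝ)^c * ((j-i).choose c : ℝ) * nuVal (i+c) j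
        = ((j.choose i : ℝ) * (j.choose i : ℝ)) *
            ((j.factorial * j.factorial : ℝ) / ((2*j+1).factorial)) := by
      intro i hi
      rw [Finset.mem_range] at hi
      have hij : i ≤ j := by omega
      have zeroes : ∀ c ∈ range (j-i), (-1:ℝ)^c * ((j-i).choose c : ℝ) * nuVal (i+c) j = 0 := by
        intro c hc
        rw [Finset.mem_range] at hc
        have : ¬ (j ≤ i + c) := by omega
        rw [nuVal, if_neg this, mul_zero]
      rw [Finset.sum_range_succ, Finset.sum_eq_zero zeroes, zero_add]
      have hic : i + (j - i) = j := by omega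
      rw [hic, Nat.choose_self, nuVal, if_pos (le_refl j)]
      have h0 : j - j = 0 := by omega
      have h1 : j + j + 1 = 2*j+1 := by ring
      rw [h0, h1, Nat.factorial_zero]
      have hsign : (-1:ℝ)^i * (-1:ℝ)^(j-i) * (-1:ℝ)^j = 1 := by
        rw [← pow_add, ← pow_add]
        apply Even.neg_one_pow
        refine ⟨j, by omega⟩
      push_cast
      calc (-1:ℝ)^i * (j.choose i : ℝ) * (j.choose i : ℝ) *
            ((-1:ℝ)^(j-i) * 1 * ((-1:ℝ)^j * ((j.factorial:ℝ) * j.factorial) / (1 * ((2*j+1).factorial : ℝ))))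
          = ((-1:ℝ)^i * (-1:ℝ)^(j-i) * (-1:ℝ)^j) *
              ((j.choose i : ℝ) * (j.choose i : ℝ) * ((j.factorial * j.factorial : ℝ) / ((2*j+1).factorial))) := by
            ring
        _ = _ := by rw [hsign, one_mul]
    rw [Finset.sum_congr rfl inner, ← Finset.sum_mul]
    have hsq : ∑ i ∈ range (j + 1), (j.choose i : ℝ) * (j.choose i : ℝ) = (((2*j).choose j : ℕ) : ℝ) := by
      have : ∑ i ∈ range (j + 1), j.choose i * j.choose i = (2 * j).choose j := by
        have h := Nat.add_choose_eq j j j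
        rw [show j + j = 2 * j by ring] at h
        rw [h, Finset.Nat.sum_antidiagonal_eq_sum_range_succ_mk]
        exact Finset.sum_congr rfl (fun i hi => by
          rw [Nat.choose_symm (by rw [Finset.mem_range] at hi; omega : i ≤ j)])
      exact_mod_cast congrArg (Nat.cast (R := ℝ)) this
    rw [hsq]
    have hcf : (2*j).choose j * j.factorial * j.factorial = (2*j).factorial := by
      have := Nat.choose_mul_factorial_mul_factorial (by omega : j ≤ 2*j)
      rwa [show 2*j - j = j by omega] at this
    have hcfR : (((2*j).choose j : ℕ) : ℝ) * j.factorial * j.factorial = ((2*j).factorial : ℝ) := by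
      exact_mod_cast congrArg (Nat.cast (R := ℝ)) hcf
    have hfs : ((2*j+1).factorial : ℝ) = (2*(j:ℝ)+1) * ((2*j).factorial : ℝ) := by
      rw [Nat.factorial_succ]; push_cast; ring
    have hne1 : ((2*j+1).factorial : ℝ) ≠ 0 := by positivity
    have hne2 : (2*(j:ℝ)+1) ≠ 0 := by positivity
    rw [hfs]
    field_simp
    linear_combination hcfR
  · rw [if_neg hjk']
    apply Finset.sum_eq_zero
    intro i hi
    rw [Finset.mem_range] at hi
    have hz : ∑ c ∈ range (j-i+1), (-1:ℝ)^c * ((j-i).choose c : ℝ) * nuVal (i+c) k = 0 := by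
      apply Finset.sum_eq_zero
      intro c hc
      rw [Finset.mem_range] at hc
      have : ¬ (k ≤ i + c) := by omega
      rw [nuVal, if_neg this, mul_zero]
    rw [hz, mul_zero]

lemma LgLg (j k : ℕ) :
    ∫ t in (0:ℝ)..1, Lg j t * Lg k t = if j = k then 1 / (2*(k:ℝ)+1) else 0 := by
  rcases le_or_gt j k with h | h
  · exact LgLg_le h
  · have e : (fun t : ℝ => Lg j t * Lg k t) = fun t => Lg k t * Lg j t := by
      funext t; ring
    rw [e, LgLg_le h.le]
    have : k ≠ j := by omega
    rw [if_neg this, if_neg (by omega : ¬ j = k)]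

lemma span_PD {d : ℕ} {f : ℝ → ℝ} (h : PD (d+1) f) :
    ∃ c : ℕ → ℝ, ∀ x : ℝ, f x = ∑ l ∈ range (d+1), c l * Lg l x := by
  classical
  obtain ⟨w, hw⟩ := h
  have hcs : ∀ s, s ∈ range (d+1) → ∃ c : ℕ → ℝ, ∀ x : ℝ,
      x ^ s = ∑ l ∈ range (d+1), c l * Lg l x := fun s hs =>
    span_mono d s (by rw [Finset.mem_range] at hs; omega)
  choose cc hcc using hcs
  set cpad : ℕ → ℕ → ℝ := fun s l => if h : s ∈ range (d+1) then cc s h l else 0 with hcp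
  refine ⟨fun l => ∑ s ∈ range (d+1), w s * cpad s l, fun x => ?_⟩
  rw [hw x]
  have e1 : ∀ l ∈ range (d+1), (∑ s ∈ range (d+1), w s * cpad s l) * Lg l x
      = ∑ s ∈ range (d+1), w s * cpad s l * Lg l x := fun l _ => Finset.sum_mul _ _ _
  rw [Finset.sum_congr rfl e1, Finset.sum_comm]
  apply Finset.sum_congr rfl
  intro s hs
  have e2 : ∑ l ∈ range (d+1), w s * cpad s l * Lg l x
      = w s * ∑ l ∈ range (d+1), cpad s l * Lg l x := by
    rw [Finset.mul_sum]
    exact Finset.sum_congr rfl (fun l _ => by ring)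
  rw [e2]
  have e3 : ∀ l, cpad s l = cc s hs l := fun l => by rw [hcp]; simp [hs]
  rw [Finset.sum_congr rfl (fun l _ => by rw [e3 l]), ← hcc s hs x]

lemma vanish_L {d : ℕ} {G : ℝ → ℝ} (hPD : PD (d+1) G)
    (h : ∀ j, j ≤ d → ∫ x in (0:ℝ)..1, Lg j x * G x = 0) : ∀ x, G x = 0 := by
  obtain ⟨c, hc⟩ := span_PD hPD
  have hcz : ∀ j, j ≤ d → c j = 0 := by
    intro j hj
    have e : (fun x : ℝ => Lg j x * G x)
        = fun x => ∑ l ∈ range (d+1), c l * (Lg j x * Lg l x) := by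
      funext x
      rw [hc x, Finset.mul_sum]
      exact Finset.sum_congr rfl (fun l _ => by ring)
    have h2 := h j hj
    rw [e, intervalIntegral.integral_finset_sum (fun l _ =>
      ((continuous_const.fun_mul ((continuous_Lg j).fun_mul (continuous_Lg l))).intervalIntegrable 0 1))] at h2
    have e4 : ∀ l ∈ range (d+1),
        (∫ x in (0:ℝ)..1, c l * (Lg j x * Lg l x))
          = c l * (if j = l then 1 / (2*(l:ℝ)+1) else 0) := by
      intro l _
      rw [intervalIntegral.integral_const_mul, LgLg j l]
    rw [Finset.sum_congr rfl e4] at h2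
    have e5 : ∀ l ∈ range (d+1), c l * (if j = l then 1 / (2*(l:ℝ)+1) else 0)
        = if l = j then c l * (1 / (2*(l:ℝ)+1)) else 0 := by
      intro l _
      by_cases hlj : l = j
      · subst hlj; rw [if_pos rfl, if_pos rfl]
      · rw [if_neg hlj, if_neg (fun hh => hlj hh.symm), mul_zero]
    rw [Finset.sum_congr rfl e5, Finset.sum_ite_eq' (range (d+1)) j
      (fun l => c l * (1 / (2*(l:ℝ)+1))), if_pos (Finset.mem_range.mpr (by omega))] at h2
    have hne : (1 / (2*(j:ℝ)+1)) ≠ 0 := by positivity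
    rcases mul_eq_zero.mp h2 with h | h
    · exact h
    · exact absurd h hne
  intro x
  rw [hc x]
  apply Finset.sum_eq_zero
  intro l hl
  rw [Finset.mem_range] at hl
  rw [hcz l (by omega), zero_mul]

lemma vanish_mono {d : ℕ} {G : ℝ → ℝ} (hPD : PD (d+1) G)
    (h : ∀ r, r ≤ d → ∫ x in (0:ℝ)..1, x ^ r * G x = 0) : ∀ x, G x = 0 := by
  apply vanish_L hPD
  intro j hj
  obtain ⟨wG, hwG⟩ := hPD
  obtain ⟨wj, hwj⟩ := pd_Lg j
  have e : (fun x : ℝ => Lg j x * G x)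
      = fun x => ∑ r ∈ range (j+1), wj r * (x ^ r * G x) := by
    funext x
    rw [hwj x, Finset.sum_mul]
    exact Finset.sum_congr rfl (fun r _ => by ring)
  rw [e, intervalIntegral.integral_finset_sum (fun r _ => ?_)]
  · apply Finset.sum_eq_zero
    intro r hr
    rw [Finset.mem_range] at hr
    rw [intervalIntegral.integral_const_mul, h r (by omega), mul_zero]
  · have eG : (fun x : ℝ => wj r * (x ^ r * G x))
        = fun x => wj r * (x ^ r * ∑ s ∈ range (d+1), wG s * x ^ s) := by
      funext x; rw [hwG x]
    rw [eG]
    apply Continuous.intervalIntegrable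
    apply continuous_const.mul
    apply (continuous_pow r).mul
    exact continuous_finset_sum _ (fun s _ => continuous_const.mul (continuous_pow s))

lemma continuous_K2 (n : ℕ) (x : ℝ) : Continuous (fun t => durrmeyerKernel n x t) := by
  unfold durrmeyerKernel
  exact continuous_const.mul (continuous_finset_sum _
    (fun k _ => continuous_const.mul (continuous_bern n k)))

lemma lam_eq_Dc (n k : ℕ) : lam n k = Dc n k k := by
  unfold lam Dc
  have h1 : n.descFactorial k = k.factorial * n.choose k := Nat.descFactorial_eq_factorial_mul_choose n k
  have h2 : (n+1).factorial * (n+k+1).descFactorial k = (n+k+1).factorial := by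
    have := Nat.factorial_mul_descFactorial (by omega : k ≤ n+k+1)
    rwa [show n+k+1-k = n+1 by omega] at this
  have h2R : ((n+1).factorial : ℝ) * ((n+k+1).descFactorial k : ℝ) = ((n+k+1).factorial : ℝ) := by
    exact_mod_cast congrArg (Nat.cast (R := ℝ)) h2
  have hd : ((n+k+1).descFactorial k : ℝ) ≠ 0 := by
    have : 0 < (n+k+1).descFactorial k := by
      rcases Nat.eq_zero_or_pos ((n+k+1).descFactorial k) with h | h
      · exfalso; have := Nat.descFactorial_eq_zero_iff_lt.mp h; omega
      · exact h
    positivity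
  have hf : ((n+k+1).factorial : ℝ) ≠ 0 := by positivity
  rw [h1, Nat.choose_self]
  push_cast
  field_simp
  linear_combination (-(n.choose k : ℝ)) * h2R

lemma binmom (n s : ℕ) (x : ℝ) :
    ∑ j ∈ range (n+1), bernsteinBasis n j x * (j.choose s : ℝ) = (n.choose s : ℝ) * x ^ s := by
  by_cases hsn : s ≤ n
  · have hsub : Finset.Ico s (n+1) ⊆ range (n+1) := by
      intro j hj; rw [Finset.mem_Ico] at hj; rw [Finset.mem_range]; omega
    rw [← Finset.sum_subset hsub (fun j hj hj2 => ?_)]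
    · rw [Finset.sum_Ico_eq_sum_range]
      have hterm : ∀ u ∈ range (n+1-s), bernsteinBasis n (s+u) x * ((s+u).choose s : ℝ)
          = ((n.choose s : ℝ) * x ^ s) * ((n-s).choose u * x ^ u * (1-x) ^ (n-s-u)) := by
        intro u hu
        rw [Finset.mem_range] at hu
        have h1 : n.choose (s+u) * (s+u).choose s = n.choose s * (n-s).choose u := by
          have := Nat.choose_mul (n := n) (by omega : s ≤ s+u)
          rwa [show s+u-s = u from by omega] at this
        have h1R : (n.choose (s+u) : ℝ) * ((s+u).choose s : ℝ)
            = (n.choose s : ℝ) * ((n-s).choose u : ℝ) := by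
          exact_mod_cast congrArg (Nat.cast (R := ℝ)) h1
        unfold bernsteinBasis
        rw [show n - (s+u) = n-s-u from by omega, pow_add]
        linear_combination (x ^ s * x ^ u * (1-x)^(n-s-u)) * h1R
      rw [Finset.sum_congr rfl hterm, ← Finset.mul_sum]
      have hbin : ∑ u ∈ range (n+1-s), ((n-s).choose u : ℝ) * x ^ u * (1-x) ^ (n-s-u) = 1 := by
        have := add_pow x (1-x) (n-s)
        rw [show x + (1-x) = 1 from by ring, one_pow] at this
        rw [show n+1-s = (n-s)+1 from by omega]
        have reorder : ∑ u ∈ range ((n-s)+1), ((n-s).choose u : ℝ) * x ^ u * (1-x) ^ (n-s-u)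
            = ∑ u ∈ range ((n-s)+1), x ^ u * (1-x) ^ (n-s-u) * ((n-s).choose u : ℝ) :=
          Finset.sum_congr rfl (fun u _ => by ring)
        rw [reorder]
        exact this.symm
      rw [hbin, mul_one]
    · rw [Finset.mem_range] at hj
      rw [Finset.mem_Ico] at hj2
      have : j < s := by omega
      rw [Nat.choose_eq_zero_of_lt this]
      norm_num
  · have hz : ∀ j ∈ range (n+1), bernsteinBasis n j x * (j.choose s : ℝ) = 0 := by
      intro j hj
      rw [Finset.mem_range] at hj
      rw [Nat.choose_eq_zero_of_lt (by omega : j < s)]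
      norm_num
    rw [Finset.sum_eq_zero hz, Nat.choose_eq_zero_of_lt (by omega : n < s)]
    norm_num

lemma vandermonde_choose (j r : ℕ) :
    ((j+r).choose r : ℝ) = ∑ s ∈ range (r+1), (j.choose s : ℝ) * (r.choose s : ℝ) := by
  have h := Nat.add_choose_eq j r r
  rw [Finset.Nat.sum_antidiagonal_eq_sum_range_succ_mk] at h
  have h2 : ∀ s ∈ range (r+1), j.choose s * r.choose (r-s) = j.choose s * r.choose s := by
    intro s hs
    rw [Finset.mem_range] at hs
    rw [Nat.choose_symm (by omega : s ≤ r)]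
  rw [Finset.sum_congr rfl h2] at h
  rw [h]
  push_cast
  rfl

lemma Mn_monomial (n r : ℕ) (x : ℝ) :
    ∫ t in (0:ℝ)..1, durrmeyerKernel n x t * t ^ r
      = ∑ s ∈ range (r+1), Dc n r s * x ^ s := by
  have e : (fun t : ℝ => durrmeyerKernel n x t * t ^ r)
      = fun t => ∑ j ∈ range (n+1), ((n+1:ℝ) * bernsteinBasis n j x) * (t ^ r * bernsteinBasis n j t) := by
    funext t
    unfold durrmeyerKernel
    rw [Finset.mul_sum, Finset.sum_mul]
    exact Finset.sum_congr rfl (fun j _ => by ring)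
  rw [e, intervalIntegral.integral_finset_sum (fun j _ =>
    ((continuous_const.fun_mul ((continuous_pow r).fun_mul (continuous_bern n j))).intervalIntegrable 0 1))]
  have step : ∀ j ∈ range (n+1),
      (∫ t in (0:ℝ)..1, ((n+1:ℝ) * bernsteinBasis n j x) * (t ^ r * bernsteinBasis n j t))
      = (((n+1).factorial * r.factorial : ℝ) / (n+r+1).factorial) *
          (bernsteinBasis n j x * ((j+r).choose r : ℝ)) := by
    intro j hj
    rw [Finset.mem_range] at hj
    have hjn : j ≤ n := by omega
    rw [intervalIntegral.integral_const_mul, bern_moment n j r hjn]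
    have keyN : (n+1) * (n.choose j * ((r+j).factorial * (n-j).factorial))
        = (n+1).factorial * r.factorial * ((j+r).choose r) := by
      apply Nat.eq_of_mul_eq_mul_right (Nat.factorial_pos j)
      have h1 : n.choose j * j.factorial * (n-j).factorial = n.factorial :=
        Nat.choose_mul_factorial_mul_factorial hjn
      have h2 : (j+r).choose r * j.factorial * r.factorial = (j+r).factorial :=
        Nat.add_choose_mul_factorial_mul_factorial j r
      calc (n+1) * (n.choose j * ((r+j).factorial * (n-j).factorial)) * j.factorial
          = (n+1) * (n.choose j * j.factorial * (n-j).factorial) * (r+j).factorial := by ring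
        _ = (n+1) * n.factorial * (r+j).factorial := by rw [h1]
        _ = (n+1).factorial * (j+r).factorial := by
            rw [Nat.factorial_succ, show r+j = j+r from by omega]
        _ = (n+1).factorial * ((j+r).choose r * j.factorial * r.factorial) := by rw [h2]
        _ = (n+1).factorial * r.factorial * ((j+r).choose r) * j.factorial := by ring
    have keyNR : ((n+1):ℝ) * ((n.choose j : ℝ) * (((r+j).factorial : ℝ) * ((n-j).factorial : ℝ)))
        = ((n+1).factorial : ℝ) * (r.factorial : ℝ) * (((j+r).choose r : ℕ) : ℝ) := by
      exact_mod_cast congrArg (Nat.cast (R := ℝ)) keyN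
    rw [show n+r+1 = r+n+1 from by omega]
    have hne : ((r+n+1).factorial : ℝ) ≠ 0 := by positivity
    field_simp
    linear_combination (bernsteinBasis n j x) * keyNR
  rw [Finset.sum_congr rfl step]
  have e2 : ∀ j ∈ range (n+1),
      (((n+1).factorial * r.factorial : ℝ) / (n+r+1).factorial) *
          (bernsteinBasis n j x * ((j+r).choose r : ℝ))
      = ∑ s ∈ range (r+1), (((n+1).factorial * r.factorial : ℝ) / (n+r+1).factorial) *
          ((r.choose s : ℝ) * (bernsteinBasis n j x * (j.choose s : ℝ))) := by
    intro j _
    rw [vandermonde_choose j r, Finset.mul_sum]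
    rw [Finset.mul_sum]
    exact Finset.sum_congr rfl (fun s _ => by ring)
  rw [Finset.sum_congr rfl e2, Finset.sum_comm]
  apply Finset.sum_congr rfl
  intro s _
  have e3 : ∀ j ∈ range (n+1),
      (((n+1).factorial * r.factorial : ℝ) / (n+r+1).factorial) *
          ((r.choose s : ℝ) * (bernsteinBasis n j x * (j.choose s : ℝ)))
      = ((((n+1).factorial * r.factorial : ℝ) / (n+r+1).factorial) * (r.choose s : ℝ)) *
          (bernsteinBasis n j x * (j.choose s : ℝ)) := by
    intro j _; ring
  rw [Finset.sum_congr rfl e3, ← Finset.mul_sum, binmom n s x]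
  unfold Dc
  ring

lemma PD.sub {d : ℕ} {f g : ℝ → ℝ} (hf : PD d f) (hg : PD d g) :
    PD d (fun t => f t - g t) := by
  obtain ⟨w1, h1⟩ := hf
  obtain ⟨w2, h2⟩ := hg
  refine ⟨fun s => w1 s - w2 s, fun t => ?_⟩
  show f t - g t = _
  rw [h1 t, h2 t, ← Finset.sum_sub_distrib]
  exact Finset.sum_congr rfl (fun s _ => by ring)

lemma Kexp (n : ℕ) (g : ℝ → ℝ) (hg : Continuous g) (x : ℝ) :
    (∫ t in (0:ℝ)..1, durrmeyerKernel n x t * g t)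
      = ∑ j ∈ range (n+1), ((n+1:ℝ) * bernsteinBasis n j x) *
          ∫ t in (0:ℝ)..1, bernsteinBasis n j t * g t := by
  have e : (fun t => durrmeyerKernel n x t * g t)
      = fun t => ∑ j ∈ range (n+1), ((n+1:ℝ) * bernsteinBasis n j x) *
          (bernsteinBasis n j t * g t) := by
    funext t
    unfold durrmeyerKernel
    rw [Finset.mul_sum, Finset.sum_mul]
    exact Finset.sum_congr rfl (fun j _ => by ring)
  rw [e, intervalIntegral.integral_finset_sum (fun j _ =>
    (continuous_const.fun_mul ((continuous_bern n j).fun_mul hg)).intervalIntegrable 0 1)]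
  exact Finset.sum_congr rfl (fun j _ => intervalIntegral.integral_const_mul _ _)

lemma claimA (n k : ℕ) (x : ℝ) :
    ∫ t in (0:ℝ)..1, durrmeyerKernel n x t * Lg k t = lam n k * Lg k x := by
  classical
  obtain ⟨wk, hwk⟩ := pd_Lg k
  -- the integral as a polynomial in x
  set P : ℝ → ℝ := fun z => ∑ r ∈ range (k+1), wk r * ∑ s ∈ range (r+1), Dc n r s * z ^ s with hP
  have hF2 : ∀ z : ℝ, (∫ t in (0:ℝ)..1, durrmeyerKernel n z t * Lg k t) = P z := by
    intro z
    have e : (fun t => durrmeyerKernel n z t * Lg k t)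
        = fun t => ∑ r ∈ range (k+1), wk r * (durrmeyerKernel n z t * t ^ r) := by
      funext t
      rw [hwk t, Finset.mul_sum]
      exact Finset.sum_congr rfl (fun r _ => by ring)
    rw [e, intervalIntegral.integral_finset_sum (fun r _ =>
      (continuous_const.fun_mul ((continuous_K2 n z).fun_mul (continuous_pow r))).intervalIntegrable 0 1)]
    exact Finset.sum_congr rfl (fun r _ => by
      rw [intervalIntegral.integral_const_mul, Mn_monomial])
  set GP : ℝ → ℝ := fun z => P z - lam n k * Lg k z with hGP
  have hPDG : PD (k+1) GP := by
    apply PD.sub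
    · apply PD.finsum
      intro r hr
      rw [Finset.mem_range] at hr
      apply PD.const_mul
      apply PD.finsum
      intro s hs
      rw [Finset.mem_range] at hs
      exact PD.monomial _ (by omega)
    · exact PD.const_mul _ (pd_Lg k)
  -- moments of the integral: ∫ x^r P x = ∑_s Dc n r s nuVal s k
  have hmomP : ∀ r : ℕ, (∫ z in (0:ℝ)..1, z ^ r * P z)
      = ∑ s ∈ range (r+1), Dc n r s * nuVal s k := by
    intro r
    set β : ℕ → ℝ := fun j => ∫ u in (0:ℝ)..1, bernsteinBasis n j u * u ^ r with hβ
    set μ : ℕ → ℝ := fun j => ∫ t in (0:ℝ)..1, bernsteinBasis n j t * Lg k t with hμ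
    have step1 : (∫ z in (0:ℝ)..1, z ^ r * P z)
        = ∑ j ∈ range (n+1), ((n+1:ℝ) * μ j) * β j := by
      have e : (fun z : ℝ => z ^ r * P z)
          = fun z => ∑ j ∈ range (n+1), ((n+1:ℝ) * μ j) * (bernsteinBasis n j z * z ^ r) := by
        funext z
        rw [← hF2 z, Kexp n (Lg k) (continuous_Lg k) z, Finset.mul_sum]
        exact Finset.sum_congr rfl (fun j _ => by rw [hμ]; ring)
      rw [e, intervalIntegral.integral_finset_sum (fun j _ =>
        (continuous_const.fun_mul ((continuous_bern n j).fun_mul (continuous_pow r))).intervalIntegrable 0 1)]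
      exact Finset.sum_congr rfl (fun j _ => intervalIntegral.integral_const_mul _ _)
    have step2 : ∑ j ∈ range (n+1), ((n+1:ℝ) * μ j) * β j
        = ∫ t in (0:ℝ)..1, (∑ s ∈ range (r+1), Dc n r s * t ^ s) * Lg k t := by
      have e : (fun t : ℝ => (∑ s ∈ range (r+1), Dc n r s * t ^ s) * Lg k t)
          = fun t => ∑ j ∈ range (n+1), ((n+1:ℝ) * β j) * (bernsteinBasis n j t * Lg k t) := by
        funext t
        have h1 : (∑ s ∈ range (r+1), Dc n r s * t ^ s)
            = ∑ j ∈ range (n+1), ((n+1:ℝ) * bernsteinBasis n j t) * β j := by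
          rw [← Mn_monomial n r t, Kexp n (fun u => u ^ r) (continuous_pow r) t]
        rw [h1, Finset.sum_mul]
        exact Finset.sum_congr rfl (fun j _ => by ring)
      rw [e, intervalIntegral.integral_finset_sum (fun j _ =>
        (continuous_const.fun_mul ((continuous_bern n j).fun_mul (continuous_Lg k))).intervalIntegrable 0 1)]
      rw [Finset.sum_congr rfl (fun j (_ : j ∈ range (n+1)) =>
        intervalIntegral.integral_const_mul ((n+1:ℝ) * β j) _)]
      exact Finset.sum_congr rfl (fun j _ => by ring)
    have step3 : (∫ t in (0:ℝ)..1, (∑ s ∈ range (r+1), Dc n r s * t ^ s) * Lg k t)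
        = ∑ s ∈ range (r+1), Dc n r s * nuVal s k := by
      have e : (fun t : ℝ => (∑ s ∈ range (r+1), Dc n r s * t ^ s) * Lg k t)
          = fun t => ∑ s ∈ range (r+1), Dc n r s * (t ^ s * Lg k t) := by
        funext t
        rw [Finset.sum_mul]
        exact Finset.sum_congr rfl (fun s _ => by ring)
      rw [e, intervalIntegral.integral_finset_sum (fun s _ =>
        (continuous_const.fun_mul ((continuous_pow s).fun_mul (continuous_Lg k))).intervalIntegrable 0 1)]
      exact Finset.sum_congr rfl (fun s _ => by
        rw [intervalIntegral.integral_const_mul, nu])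
    rw [step1, step2, step3]
  -- moments of GP vanish
  have hmom : ∀ r, r ≤ k → ∫ z in (0:ℝ)..1, z ^ r * GP z = 0 := by
    intro r hrk
    have esub : (fun z : ℝ => z ^ r * GP z)
        = fun z => z ^ r * P z - (lam n k) * (z ^ r * Lg k z) := by
      funext z
      rw [hGP]
      ring
    have hintP : IntervalIntegrable (fun z : ℝ => z ^ r * P z) volume 0 1 := by
      apply Continuous.intervalIntegrable
      apply (continuous_pow r).mul
      apply continuous_finset_sum
      intro i _
      apply continuous_const.mul
      exact continuous_finset_sum _ (fun s _ => continuous_const.mul (continuous_pow s))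
    have hintL : IntervalIntegrable (fun z : ℝ => (lam n k) * (z ^ r * Lg k z)) volume 0 1 :=
      (continuous_const.mul ((continuous_pow r).mul (continuous_Lg k))).intervalIntegrable 0 1
    rw [esub, intervalIntegral.integral_sub hintP hintL, hmomP r,
      intervalIntegral.integral_const_mul, nu]
    rcases Nat.lt_or_ge r k with hlt | hge
    · have hz : ∀ s ∈ range (r+1), Dc n r s * nuVal s k = 0 := by
        intro s hs
        rw [Finset.mem_range] at hs
        rw [nuVal, if_neg (by omega : ¬ k ≤ s), mul_zero]
      rw [Finset.sum_eq_zero hz, nuVal, if_neg (by omega : ¬ k ≤ r)]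
      ring
    · have hrk' : r = k := by omega
      subst hrk'
      have hsplit : ∑ s ∈ range (r+1), Dc n r s * nuVal s r
          = Dc n r r * nuVal r r := by
        rw [Finset.sum_range_succ]
        have hz : ∀ s ∈ range r, Dc n r s * nuVal s r = 0 := by
          intro s hs
          rw [Finset.mem_range] at hs
          rw [nuVal, if_neg (by omega : ¬ r ≤ s), mul_zero]
        rw [Finset.sum_eq_zero hz, zero_add]
      rw [hsplit, ← lam_eq_Dc]
      ring
  have hzero := vanish_mono hPDG hmom
  have := hzero x
  rw [hGP] at this
  have h2 : P x - lam n k * Lg k x = 0 := this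
  rw [hF2 x]
  linarith

lemma Ksymm (n : ℕ) (x y : ℝ) : durrmeyerKernel n x y = durrmeyerKernel n y x := by
  unfold durrmeyerKernel
  congr 1
  exact Finset.sum_congr rfl (fun k _ => by ring)

lemma claimB (n : ℕ) (x y : ℝ) :
    durrmeyerKernel n x y
      = ∑ k ∈ range (n+1), (2*(k:ℝ)+1) * lam n k * Lg k x * Lg k y := by
  set R : ℝ → ℝ := fun t => durrmeyerKernel n t y
      - ∑ k ∈ range (n+1), ((2*(k:ℝ)+1) * lam n k * Lg k y) * Lg k t with hR
  have hPD : PD (n+1) R := by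
    apply PD.sub
    · have e : (fun t => durrmeyerKernel n t y)
          = fun t => ∑ j ∈ range (n+1), ((n+1:ℝ) * bernsteinBasis n j y) * bernsteinBasis n j t := by
        funext t
        unfold durrmeyerKernel
        rw [Finset.mul_sum]
        exact Finset.sum_congr rfl (fun j _ => by ring)
      rw [e]
      exact PD.finsum _ _ (fun j _ => PD.const_mul _ (pd_bern n j))
    · apply PD.finsum
      intro k hk
      rw [Finset.mem_range] at hk
      exact PD.const_mul _ (PD.mono (by omega) (pd_Lg k))
  have hL : ∀ j, j ≤ n → ∫ t in (0:ℝ)..1, Lg j t * R t = 0 := by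
    intro j hj
    have e : (fun t : ℝ => Lg j t * R t)
        = fun t => (durrmeyerKernel n y t * Lg j t)
            - ∑ k ∈ range (n+1), ((2*(k:ℝ)+1) * lam n k * Lg k y) * (Lg k t * Lg j t) := by
      funext t
      rw [hR]
      simp only []
      rw [Ksymm n t y, mul_sub, Finset.mul_sum]
      congr 1
      · ring
      · exact Finset.sum_congr rfl (fun k _ => by ring)
    have hint1 : IntervalIntegrable (fun t : ℝ => durrmeyerKernel n y t * Lg j t) volume 0 1 :=
      ((continuous_K2 n y).mul (continuous_Lg j)).intervalIntegrable 0 1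
    have hint2 : IntervalIntegrable (fun t : ℝ =>
        ∑ k ∈ range (n+1), ((2*(k:ℝ)+1) * lam n k * Lg k y) * (Lg k t * Lg j t)) volume 0 1 := by
      apply Continuous.intervalIntegrable
      exact continuous_finset_sum _ (fun k _ =>
        continuous_const.mul ((continuous_Lg k).mul (continuous_Lg j)))
    rw [e, intervalIntegral.integral_sub hint1 hint2, claimA n j y,
      intervalIntegral.integral_finset_sum (fun k _ =>
        (continuous_const.fun_mul ((continuous_Lg k).fun_mul (continuous_Lg j))).intervalIntegrable 0 1)]
    have hterm : ∀ k ∈ range (n+1),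
        (∫ t in (0:ℝ)..1, ((2*(k:ℝ)+1) * lam n k * Lg k y) * (Lg k t * Lg j t))
          = if k = j then lam n j * Lg j y else 0 := by
      intro k _
      rw [intervalIntegral.integral_const_mul, LgLg k j]
      by_cases hkj : k = j
      · subst hkj
        rw [if_pos rfl, if_pos rfl]
        have : 2*(k:ℝ)+1 ≠ 0 := by positivity
        field_simp
      · rw [if_neg hkj, if_neg hkj, mul_zero]
    rw [Finset.sum_congr rfl hterm, Finset.sum_ite_eq' (range (n+1)) j
      (fun _ => lam n j * Lg j y), if_pos (Finset.mem_range.mpr (by omega))]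
    ring
  have := vanish_L hPD hL x
  rw [hR] at this
  simp only [] at this
  have h2 : durrmeyerKernel n x y
      = ∑ k ∈ range (n+1), ((2*(k:ℝ)+1) * lam n k * Lg k y) * Lg k x := by linarith
  rw [h2]
  exact Finset.sum_congr rfl (fun k _ => by ring)


theorem durrmeyer_comp_kernel_legendre_repr (m n : ℕ) (x y : ℝ)
    (hx : x ∈ Set.Icc (0:ℝ) 1) (hy : y ∈ Set.Icc (0:ℝ) 1) :
    durrmeyerKernelComp m n x y =
      ∑ k ∈ Finset.range (min m n + 1),
        ((m.descFactorial k : ℝ) / ((m + k + 1).descFactorial k : ℝ)) *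
          ((n.descFactorial k : ℝ) / ((n + k + 1).descFactorial k : ℝ)) *
          (2 * (k : ℝ) + 1) *
          (∑ i ∈ Finset.range (k + 1), (-1 : ℝ) ^ i * (k.choose i : ℝ) * bernsteinBasis k i x) *
          (∑ j ∈ Finset.range (k + 1), (-1 : ℝ) ^ j * (k.choose j : ℝ) * bernsteinBasis k j y) := by
  unfold durrmeyerKernelComp
  have e : (fun t : ℝ => durrmeyerKernel m x t * durrmeyerKernel n t y)
      = fun t => ∑ k ∈ range (m+1),
          ((2*(k:ℝ)+1) * lam m k * Lg k x) * (durrmeyerKernel n y t * Lg k t) := by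
    funext t
    rw [claimB m x t, Finset.sum_mul]
    exact Finset.sum_congr rfl (fun k _ => by rw [Ksymm n t y]; ring)
  rw [e, intervalIntegral.integral_finset_sum (fun k _ =>
    (continuous_const.fun_mul ((continuous_K2 n y).fun_mul (continuous_Lg k))).intervalIntegrable 0 1)]
  have hterm : ∀ k ∈ range (m+1),
      (∫ t in (0:ℝ)..1, ((2*(k:ℝ)+1) * lam m k * Lg k x) * (durrmeyerKernel n y t * Lg k t))
        = lam m k * lam n k * (2*(k:ℝ)+1) * Lg k x * Lg k y := by
    intro k _
    rw [intervalIntegral.integral_const_mul, claimA n k y]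
    ring
  rw [Finset.sum_congr rfl hterm]
  have hsub : range (min m n + 1) ⊆ range (m+1) := by
    intro k hk; rw [Finset.mem_range] at *; omega
  rw [← Finset.sum_subset hsub (fun k hk1 hk2 => ?_)]
  · exact Finset.sum_congr rfl (fun k _ => by rw [show Lg k x = _ from rfl, show Lg k y = _ from rfl]; unfold lam Lg; ring)
  · rw [Finset.mem_range] at hk1 hk2
    have hkn : n < k := by omega
    have : lam n k = 0 := by
      unfold lam
      rw [Nat.descFactorial_eq_zero_iff_lt.mpr hkn]
      norm_num
    rw [this]
    ring
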